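/- arXiv:2110.11655 — 5 statements merged into one kernel-verified Lean document; each statement's English description precedes it below -/
import Mathlib

section
/- Let k be a commutative ring, let U and V be groups, let A be a subgroup of U, let α : A → V be an injective group homomorphism, and let W = U *_A V be the amalgamated free product (the pushout of the inclusion A → U and α : A → V). Then there is an exact sequence of left kW-modules 0 → kI_A^W →γ kI_U^W ⊕ kI_V^W →p kI_W → 0, where γ(a) = (a, −a) for a ∈ kI_A^W and p(b, c) = b + c; that is, γ is injective, the image of γ equals the kernel of p, and p maps kI_U^W ⊕ kI_V^W onto kI_W. -/
/-- The augmentation homomorphism `kG → k` sending each group element to `1`. -/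
noncomputable def augHom (k : Type*) [CommRing k] (G : Type*) [Group G] :
    MonoidAlgebra k G →ₐ[k] k :=
  MonoidAlgebra.lift k k G 1

/-- The augmentation ideal `kI_G` of the group algebra `kG`: the kernel of the augmentation. -/
noncomputable def augIdeal (k : Type*) [CommRing k] (G : Type*) [Group G] :
    Ideal (MonoidAlgebra k G) :=
  RingHom.ker (augHom k G).toRingHom

/-- For a subgroup `H ≤ G`, the left ideal `kI_H^G` of `kG` generated by the elements `h - 1`
for `h ∈ H`. -/
noncomputable def relAugIdeal (k : Type*) [CommRing k] {G : Type*} [Group G]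
    (H : Subgroup G) : Ideal (MonoidAlgebra k G) :=
  Ideal.span ((fun h => MonoidAlgebra.of k G h - 1) '' (H : Set G))

/-- The amalgamated free product `U *_A V` along a subgroup `A ≤ U` and a monomorphism
`α : A → V`: the pushout of the inclusion `A → U` and `α`, realized as the quotient of the
free product `U * V` by the normal closure of the elements `a·α(a)⁻¹` for `a ∈ A`. -/
def AmalgamatedProduct (U V : Type*) [Group U] [Group V] (A : Subgroup U) (α : A →* V) :=
  Monoid.Coprod U V ⧸
    Subgroup.normalClosure
      {x : Monoid.Coprod U V |
        ∃ a : A, x = Monoid.Coprod.inl (a : U) * (Monoid.Coprod.inr (α a))⁻¹}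

instance (U V : Type*) [Group U] [Group V] (A : Subgroup U) (α : A →* V) :
    Group (AmalgamatedProduct U V A α) :=
  inferInstanceAs (Group (Monoid.Coprod U V ⧸
    Subgroup.normalClosure
      {x : Monoid.Coprod U V |
        ∃ a : A, x = Monoid.Coprod.inl (a : U) * (Monoid.Coprod.inr (α a))⁻¹}))

/-- The canonical map `U → U *_A V`. -/
def AmalgamatedProduct.inl {U V : Type*} [Group U] [Group V] (A : Subgroup U) (α : A →* V) :
    U →* AmalgamatedProduct U V A α :=
  (QuotientGroup.mk' _).comp Monoid.Coprod.inl

/-- The canonical map `V → U *_A V`. -/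
def AmalgamatedProduct.inr {U V : Type*} [Group U] [Group V] (A : Subgroup U) (α : A →* V) :
    V →* AmalgamatedProduct U V A α :=
  (QuotientGroup.mk' _).comp Monoid.Coprod.inr

/-!
Write `P, Q, R` for the images of `U, V, A` in `W`. Then `kI_H^W` is the kernel of
`kW → k[W ⧸ H]`, and `kI_P^W + kI_Q^W = kI_W` because `P` and `Q` generate `W`; the one real point
is `kI_P^W ∩ kI_Q^W ⊆ kI_R^W`. An element of the intersection gives a finitely supported
`1`-chain on the edges `W ⧸ R` of the Bass–Serre tree of `W` (vertices `W ⧸ P ⊔ W ⧸ Q`), with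
zero boundary. As the tree has no cycles this chain vanishes: orient each edge `wR` away from the
base vertex and give it the height `|w⁻¹|`, the length of the normal form of `w⁻¹` in the pushout;
at the far endpoint of an edge of maximal height in the support no other edge of the support
arrives, so the boundary has a nonzero coefficient there.
-/

open MonoidAlgebra

section RelAugIdeal

variable {k : Type*} [CommRing k] {W : Type*} [Group W]

def subOneMemSubgroup (J : Ideal (MonoidAlgebra k W)) : Subgroup W where
  carrier := {w | of k W w - 1 ∈ J}
  one_mem' := by simp only [Set.mem_ofPred_eq, map_one, sub_self, zero_mem]
  mul_mem' {x y} hx hy := by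
    have : of k W (x * y) - 1 = of k W x * (of k W y - 1) + (of k W x - 1) := by
      rw [map_mul]; noncomm_ring
    simpa only [Set.mem_ofPred_eq, this] using add_mem (J.mul_mem_left _ hy) hx
  inv_mem' {x} hx := by
    have : of k W x⁻¹ - 1 = -(of k W x⁻¹ * (of k W x - 1)) := by
      rw [mul_sub, ← map_mul, inv_mul_cancel, map_one, mul_one, neg_sub]
    simpa only [Set.mem_ofPred_eq, this] using neg_mem (J.mul_mem_left _ hx)

@[simp]
theorem mem_subOneMemSubgroup {J : Ideal (MonoidAlgebra k W)} {w : W} :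
    w ∈ subOneMemSubgroup J ↔ of k W w - 1 ∈ J :=
  Iff.rfl

theorem relAugIdeal_le_iff {H : Subgroup W} {J : Ideal (MonoidAlgebra k W)} :
    relAugIdeal k H ≤ J ↔ H ≤ subOneMemSubgroup J := by
  rw [relAugIdeal, Ideal.span_le, Set.image_subset_iff]
  rfl

theorem relAugIdeal_mono {H₁ H₂ : Subgroup W} (h : H₁ ≤ H₂) :
    relAugIdeal k H₁ ≤ relAugIdeal k H₂ :=
  Ideal.span_mono (Set.image_mono h)

theorem relAugIdeal_sup (P Q : Subgroup W) :
    relAugIdeal k (P ⊔ Q) = relAugIdeal k P ⊔ relAugIdeal k Q := by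
  refine le_antisymm ?_ (sup_le (relAugIdeal_mono le_sup_left) (relAugIdeal_mono le_sup_right))
  rw [relAugIdeal_le_iff]
  exact sup_le (relAugIdeal_le_iff.1 le_sup_left) (relAugIdeal_le_iff.1 le_sup_right)

theorem of_sub_of_mem_relAugIdeal {H : Subgroup W} {g g' : W} (h : g⁻¹ * g' ∈ H) :
    of k W g' - of k W g ∈ relAugIdeal k H := by
  have : of k W g' - of k W g = of k W g * (of k W (g⁻¹ * g') - 1) := by
    rw [mul_sub, ← map_mul, mul_inv_cancel_left, mul_one]
  rw [this]
  exact Ideal.mul_mem_left _ _ (Ideal.subset_span ⟨_, h, rfl⟩)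

theorem augHom_of (g : W) : augHom k W (of k W g) = 1 := by
  simp [augHom]

theorem sub_augHom_smul_one_mem {J : Ideal (MonoidAlgebra k W)} (hJ : ∀ g, of k W g - 1 ∈ J)
    (x : MonoidAlgebra k W) : x - augHom k W x • 1 ∈ J := by
  induction x using MonoidAlgebra.induction_on with
  | of g => rw [augHom_of, one_smul]; exact hJ g
  | add x y hx hy =>
    rw [map_add, add_smul, add_sub_add_comm]
    exact add_mem hx hy
  | smul r x hx =>
    rw [map_smul, smul_eq_mul, mul_smul, ← smul_sub]
    exact Submodule.smul_of_tower_mem _ r hx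

theorem relAugIdeal_top : relAugIdeal k (⊤ : Subgroup W) = augIdeal k W := by
  refine le_antisymm (relAugIdeal_le_iff.2 fun g _ => ?_) fun x hx => ?_
  · show augHom k W (of k W g - 1) = 0
    rw [map_sub, augHom_of, map_one, sub_self]
  · have hx : augHom k W x = 0 := hx
    simpa [hx] using sub_augHom_smul_one_mem
      (J := relAugIdeal k ⊤) (fun g => Ideal.subset_span ⟨g, Subgroup.mem_top g, rfl⟩) x

end RelAugIdeal

section CosetKernel

variable (k : Type*) [CommRing k] {W : Type*} [Group W]

noncomputable abbrev cosetMap (H : Subgroup W) :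
    MonoidAlgebra k W →ₗ[k] MonoidAlgebra k (W ⧸ H) :=
  mapDomainLinearMap k k QuotientGroup.mk

theorem cosetMap_of_mul (H : Subgroup W) (g : W) (x : MonoidAlgebra k W) :
    cosetMap k H (of k W g * x) =
      mapDomainLinearMap k k (g • · : W ⧸ H → W ⧸ H) (cosetMap k H x) := by
  induction x using MonoidAlgebra.induction_on with
  | of w => simp [MulAction.Quotient.smul_mk]
  | add x y hx hy => rw [mul_add, map_add, map_add, map_add, hx, hy]
  | smul r x hx => rw [mul_smul_comm, map_smul, map_smul, map_smul, hx]

noncomputable def cosetKer (H : Subgroup W) : Ideal (MonoidAlgebra k W) where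
  carrier := {x | cosetMap k H x = 0}
  zero_mem' := map_zero _
  add_mem' {x y} hx hy := by simp_all
  smul_mem' c x hx := by
    induction c using MonoidAlgebra.induction_on with
    | of g =>
      change cosetMap k H (of k W g * x) = 0
      rw [cosetMap_of_mul, show cosetMap k H x = 0 from hx, map_zero]
    | add c d hc hd =>
      change cosetMap k H ((c + d) * x) = 0
      rw [add_mul, map_add, show cosetMap k H (c * x) = 0 from hc,
        show cosetMap k H (d * x) = 0 from hd, add_zero]
    | smul r c hc =>
      change cosetMap k H ((r • c) * x) = 0
      rw [smul_mul_assoc, map_smul, show cosetMap k H (c * x) = 0 from hc, smul_zero]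

variable {k}

@[simp]
theorem mem_cosetKer {H : Subgroup W} {x : MonoidAlgebra k W} :
    x ∈ cosetKer k H ↔ cosetMap k H x = 0 :=
  Iff.rfl

theorem sub_mapDomain_out_mem_relAugIdeal (H : Subgroup W) (x : MonoidAlgebra k W) :
    x - mapDomainLinearMap k k Quotient.out (cosetMap k H x) ∈ relAugIdeal k H := by
  rw [← LinearMap.comp_apply, ← mapDomainLinearMap_comp]
  induction x using MonoidAlgebra.induction_on with
  | of g =>
    simpa using of_sub_of_mem_relAugIdeal (QuotientGroup.eq.1 (QuotientGroup.out_eq' (g : W ⧸ H)))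
  | add x y hx hy =>
    rw [map_add, add_sub_add_comm]
    exact add_mem hx hy
  | smul r x hx =>
    rw [map_smul, ← smul_sub]
    exact Submodule.smul_of_tower_mem _ r hx

theorem relAugIdeal_eq_cosetKer (H : Subgroup W) : relAugIdeal k H = cosetKer k H := by
  refine le_antisymm (relAugIdeal_le_iff.2 fun h hh => ?_) fun x hx => ?_
  · have : (h : W ⧸ H) = ((1 : W) : W ⧸ H) := QuotientGroup.eq.2 (by simpa using hh)
    rw [mem_subOneMemSubgroup, mem_cosetKer, ← map_one (of k W)]
    simp [this]
  · simpa [mem_cosetKer.1 hx] using sub_mapDomain_out_mem_relAugIdeal H x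

end CosetKernel

theorem Finsupp.apply_eq_zero_of_mapDomain_eq_zero {E X M : Type*} [AddCommMonoid M] {f : E → X}
    {y : E →₀ M} (hy : y.mapDomain f = 0) {e : E} (he : ∀ e' ∈ y.support, f e' = f e → e' = e) :
    y e = 0 := by
  classical
  have := Finsupp.mapDomain_apply_eq_sum f y (a := e)
  rw [hy, Finsupp.coe_zero, Pi.zero_apply, Finset.sum_eq_single e] at this
  · exact this.symm
  · intro e' he' hne
    simp only [Finset.mem_filter] at he'
    exact absurd (he e' he'.1 he'.2) hne
  · intro he'
    exact Finsupp.notMem_support_iff.1 fun h => he' (Finset.mem_filter.2 ⟨h, rfl⟩)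

/-- Read `y` as a `1`-chain on the graph with edges `E` and vertices `X ⊔ Y`, the edge `e` joining
`f e` and `g e`: a chain with zero boundary vanishes as soon as every edge has an endpoint at which
all other edges are higher. -/
theorem Finsupp.eq_zero_of_mapDomain_eq_zero_of_height {E X Y M : Type*} [AddCommMonoid M]
    {f : E → X} {g : E → Y} (h : E → ℕ)
    (hfg : ∀ e, (∀ e', f e' = f e → e' = e ∨ h e < h e') ∨
      (∀ e', g e' = g e → e' = e ∨ h e < h e'))
    {y : E →₀ M} (hf : y.mapDomain f = 0) (hg : y.mapDomain g = 0) : y = 0 := by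
  by_contra hy
  obtain ⟨e, he, hmax⟩ := y.support.exists_max_image h (Finsupp.support_nonempty_iff.2 hy)
  refine Finsupp.mem_support_iff.1 he ?_
  rcases hfg e with hp | hp
  · exact Finsupp.apply_eq_zero_of_mapDomain_eq_zero hf fun e' he' heq =>
      (hp e' heq).resolve_right (not_lt.2 (hmax e' he'))
  · exact Finsupp.apply_eq_zero_of_mapDomain_eq_zero hg fun e' he' heq =>
      (hp e' heq).resolve_right (not_lt.2 (hmax e' he'))

section CosetForest

variable {W : Type*} [Group W]

/-- For `R ≤ P, Q`, the coset graph has vertices `W ⧸ P ⊔ W ⧸ Q` and edges `W ⧸ R`, the edge `wR`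
joining `wP` and `wQ`. A height `h` on its edges is a *forest height* if every edge `wR` has an
endpoint at which all other edges `w'R` are higher; its existence makes the coset graph a forest. -/
def IsCosetForestHeight (P Q R : Subgroup W) (h : W → ℕ) : Prop :=
  ∀ w, (∀ w', w⁻¹ * w' ∈ P → w⁻¹ * w' ∈ R ∨ h w < h w') ∨
    (∀ w', w⁻¹ * w' ∈ Q → w⁻¹ * w' ∈ R ∨ h w < h w')

theorem IsCosetForestHeight.comap {W' : Type*} [Group W'] (f : W →* W')
    {P Q R : Subgroup W} {P' Q' R' : Subgroup W'} {h : W' → ℕ}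
    (hh : IsCosetForestHeight P' Q' R' h) (hP : P.map f ≤ P') (hQ : Q.map f ≤ Q')
    (hR : R'.comap f ≤ R) : IsCosetForestHeight P Q R (h ∘ f) := by
  intro w
  refine (hh (f w)).imp (fun hw w' hw' => ?_) (fun hw w' hw' => ?_)
  · have := hw (f w') (by simpa using hP ⟨_, hw', rfl⟩)
    exact this.imp_left fun hR' => hR (by simpa using hR')
  · have := hw (f w') (by simpa using hQ ⟨_, hw', rfl⟩)
    exact this.imp_left fun hR' => hR (by simpa using hR')

theorem eq_or_lt_of_quotientMapOfLE_eq {R P : Subgroup W} (hRP : R ≤ P) {h : W → ℕ} {q : W ⧸ R}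
    (hq : ∀ w', q.out⁻¹ * w' ∈ P → q.out⁻¹ * w' ∈ R ∨ h q.out < h w') (q' : W ⧸ R)
    (hq' : Subgroup.quotientMapOfLE hRP q' = Subgroup.quotientMapOfLE hRP q) :
    q' = q ∨ h q.out < h q'.out := by
  have hP : q.out⁻¹ * q'.out ∈ P := by
    rw [← QuotientGroup.eq, ← Subgroup.quotientMapOfLE_apply_mk hRP,
      ← Subgroup.quotientMapOfLE_apply_mk hRP q'.out, QuotientGroup.out_eq',
      QuotientGroup.out_eq', hq']
  refine (hq _ hP).imp (fun hR => ?_) id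
  simpa using (QuotientGroup.eq.2 hR).symm

variable {k : Type*} [CommRing k]

theorem cosetMap_eq_of_le {R P : Subgroup W} (hRP : R ≤ P) :
    cosetMap k P = mapDomainLinearMap k k (Subgroup.quotientMapOfLE hRP) ∘ₗ cosetMap k R := by
  rw [← mapDomainLinearMap_comp]
  rfl

theorem relAugIdeal_inf_le {P Q R : Subgroup W} (hRP : R ≤ P) (hRQ : R ≤ Q) {h : W → ℕ}
    (hh : IsCosetForestHeight P Q R h) :
    relAugIdeal k P ⊓ relAugIdeal k Q ≤ relAugIdeal k R := by
  rintro x ⟨hP, hQ⟩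
  simp only [relAugIdeal_eq_cosetKer, SetLike.mem_coe, mem_cosetKer] at hP hQ ⊢
  rw [cosetMap_eq_of_le hRP, LinearMap.comp_apply] at hP
  rw [cosetMap_eq_of_le hRQ, LinearMap.comp_apply] at hQ
  refine MonoidAlgebra.coeff_injective (Finsupp.eq_zero_of_mapDomain_eq_zero_of_height
    (fun q => h q.out) (fun q => ?_) congr(($hP).coeff) congr(($hQ).coeff))
  exact (hh q.out).imp (eq_or_lt_of_quotientMapOfLE_eq hRP) (eq_or_lt_of_quotientMapOfLE_eq hRQ)

end CosetForest

namespace Monoid.PushoutI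

open NormalWord

section NormalWordLength

variable {ι : Type*} {G : ι → Type*} [∀ i, Group (G i)] {H : Type*} [Group H]
  {φ : ∀ i, H →* G i} [DecidableEq ι] [∀ i, DecidableEq (G i)] (d : Transversal φ)

theorem NormalWord.toList_length_of_smul {i : ι} {g : G i} {w : NormalWord d}
    (hw : w.fstIdx ≠ some i) (hg : g ∉ (φ i).range) :
    (of (φ := φ) i g • w).toList.length = w.toList.length + 1 := by
  rw [← cons_eq_smul g w hw hg]
  simp [cons, CoprodI.Word.cons]

theorem inv_mul_mem_range_base_or_length_lt {i : ι} {v v' : PushoutI φ}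
    (hv : (v⁻¹ • empty : NormalWord d).fstIdx ≠ some i)
    (hvv' : v⁻¹ * v' ∈ (of (φ := φ) i).range) :
    v⁻¹ * v' ∈ (base φ).range ∨
      (v⁻¹ • empty : NormalWord d).toList.length < (v'⁻¹ • empty : NormalWord d).toList.length := by
  obtain ⟨g, hg⟩ := hvv'
  have hv' : v'⁻¹ = of i g⁻¹ * v⁻¹ := by rw [map_inv, hg]; group
  by_cases hgφ : g⁻¹ ∈ (φ i).range
  · obtain ⟨a, ha⟩ := hgφ
    left
    exact ⟨a⁻¹, by rw [← hg, ← of_apply_eq_base φ i, map_inv, ha, inv_inv]⟩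
  · right
    rw [hv', mul_smul, NormalWord.toList_length_of_smul d hv hgφ]
    exact Nat.lt_succ_self _

end NormalWordLength

theorem isCosetForestHeight {H : Type*} [Group H] {G : Bool → Type*} [∀ i, Group (G i)]
    [∀ i, DecidableEq (G i)] {φ : ∀ i, H →* G i} (d : Transversal φ) :
    IsCosetForestHeight (of (φ := φ) true).range (of (φ := φ) false).range (base φ).range
      (fun v => (v⁻¹ • empty : NormalWord d).toList.length) := by
  intro v
  by_cases hv : (v⁻¹ • empty : NormalWord d).fstIdx = some true
  · exact .inr fun v' => inv_mul_mem_range_base_or_length_lt d (by simp [hv])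
  · exact .inl fun v' => inv_mul_mem_range_base_or_length_lt d hv

end Monoid.PushoutI

namespace AmalgamatedProduct

open Monoid

universe u v

variable {U : Type u} {V : Type v} [Group U] [Group V] (A : Subgroup U) (α : A →* V)

theorem inl_eq_inr (a : A) : inl A α (a : U) = inr A α (α a) :=
  QuotientGroup.eq_iff_div_mem.2 (Subgroup.subset_normalClosure ⟨a, div_eq_mul_inv _ _⟩)

theorem range_inl_sup_range_inr : (inl A α).range ⊔ (inr A α).range = ⊤ := by
  rw [eq_top_iff]
  rintro w -
  obtain ⟨x, rfl⟩ := QuotientGroup.mk'_surjective _ w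
  induction x using Coprod.induction_on with
  | inl u => exact Subgroup.mem_sup_left ⟨u, rfl⟩
  | inr v => exact Subgroup.mem_sup_right ⟨v, rfl⟩
  | mul x y hx hy => rw [map_mul]; exact mul_mem hx hy

/-- `U` and `V` lifted to a common universe, since `PushoutI` takes a family of types in one
universe. -/
def factor (U : Type u) (V : Type v) : Bool → Type max u v
  | true => ULift.{v} U
  | false => ULift.{u} V

instance : ∀ b, Group (factor U V b)
  | true => inferInstanceAs (Group (ULift U))
  | false => inferInstanceAs (Group (ULift V))

def factorMap : ∀ b, A →* factor U V b
  | true => MulEquiv.ulift.symm.toMonoidHom.comp A.subtype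
  | false => MulEquiv.ulift.symm.toMonoidHom.comp α

theorem factorMap_injective (hα : Function.Injective α) :
    ∀ b, Function.Injective (factorMap A α b)
  | true => MulEquiv.ulift.symm.injective.comp A.subtype_injective
  | false => MulEquiv.ulift.symm.injective.comp hα

noncomputable def toPushoutI : AmalgamatedProduct U V A α →* PushoutI (factorMap A α) :=
  QuotientGroup.lift _
    (Coprod.lift ((PushoutI.of true).comp MulEquiv.ulift.symm.toMonoidHom)
      ((PushoutI.of false).comp MulEquiv.ulift.symm.toMonoidHom))
    (Subgroup.normalClosure_le_normal <| by
      rintro _ ⟨a, rfl⟩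
      simp only [SetLike.mem_coe, MonoidHom.mem_ker, map_mul, map_inv, Coprod.lift_apply_inl,
        Coprod.lift_apply_inr]
      exact mul_inv_eq_one.2 ((PushoutI.of_apply_eq_base _ true a).trans
        (PushoutI.of_apply_eq_base _ false a).symm))

noncomputable def ofPushoutI : PushoutI (factorMap A α) →* AmalgamatedProduct U V A α :=
  PushoutI.lift
    (fun b => match b with
      | true => (inl A α).comp MulEquiv.ulift.toMonoidHom
      | false => (inr A α).comp MulEquiv.ulift.toMonoidHom)
    ((inl A α).comp A.subtype)
    (by
      rintro (_ | _) <;> ext a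
      · exact (inl_eq_inr A α a).symm
      · rfl)

theorem ofPushoutI_base (a : A) : ofPushoutI A α (PushoutI.base _ a) = inl A α a :=
  PushoutI.lift_base _ _ _ _

theorem toPushoutI_inl (u : U) :
    toPushoutI A α (inl A α u) = PushoutI.of true (MulEquiv.ulift.symm u) :=
  rfl

theorem toPushoutI_inr (v : V) :
    toPushoutI A α (inr A α v) = PushoutI.of false (MulEquiv.ulift.symm v) :=
  rfl

theorem ofPushoutI_toPushoutI (w : AmalgamatedProduct U V A α) :
    ofPushoutI A α (toPushoutI A α w) = w := by
  suffices (ofPushoutI A α).comp (toPushoutI A α) = .id _ from DFunLike.congr_fun this w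
  refine QuotientGroup.monoidHom_ext _ (Coprod.hom_ext ?_ ?_) <;> ext x
  · change ofPushoutI A α (toPushoutI A α (inl A α x)) = inl A α x
    rw [toPushoutI_inl]
    exact PushoutI.lift_of _ _ _ _
  · change ofPushoutI A α (toPushoutI A α (inr A α x)) = inr A α x
    rw [toPushoutI_inr]
    exact PushoutI.lift_of _ _ _ _

theorem exists_isCosetForestHeight (hα : Function.Injective α) :
    ∃ h, IsCosetForestHeight (inl A α).range (inr A α).range (A.map (inl A α)) h := by
  classical
  obtain ⟨d⟩ := PushoutI.NormalWord.transversal_nonempty _ (factorMap_injective A α hα)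
  refine ⟨_, (PushoutI.isCosetForestHeight d).comap (toPushoutI A α) ?_ ?_ ?_⟩
  · rintro _ ⟨_, ⟨u, rfl⟩, rfl⟩
    exact ⟨MulEquiv.ulift.symm u, rfl⟩
  · rintro _ ⟨_, ⟨v, rfl⟩, rfl⟩
    exact ⟨MulEquiv.ulift.symm v, rfl⟩
  · rintro w ⟨a, ha⟩
    refine ⟨a, a.2, ?_⟩
    rw [← ofPushoutI_toPushoutI A α w, ← ha]
    exact (ofPushoutI_base A α a).symm

end AmalgamatedProduct

/-- **Chiswell's Mayer–Vietoris sequence for an amalgamated product.** Let `k` be a commutative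
ring, `A ≤ U` a subgroup, `α : A → V` injective, and `W = U *_A V`. Then
`0 → kI_A^W → kI_U^W ⊕ kI_V^W → kI_W → 0` is exact, where the first map is `a ↦ (a, -a)` and
the second is `(b, c) ↦ b + c`. -/
theorem amalgam_augmentation_exact_sequence (k : Type*) [CommRing k]
    (U V : Type*) [Group U] [Group V] (A : Subgroup U) (α : A →* V)
    (hα : Function.Injective α) :
    let W := AmalgamatedProduct U V A α
    let IA := relAugIdeal k (A.map (AmalgamatedProduct.inl A α))
    let IU := relAugIdeal k (AmalgamatedProduct.inl A α).range
    let IV := relAugIdeal k (AmalgamatedProduct.inr A α).range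
    let IW := augIdeal k W
    -- `γ` is well defined: `kI_A^W ⊆ kI_U^W` and `kI_A^W ⊆ kI_V^W`
    (∀ a ∈ IA, a ∈ IU ∧ a ∈ IV) ∧
    -- `γ` is injective
    Function.Injective (fun a : IA => ((a : MonoidAlgebra k W), -(a : MonoidAlgebra k W))) ∧
    -- `p` maps `kI_U^W ⊕ kI_V^W` into `kI_W`
    (∀ b ∈ IU, ∀ c ∈ IV, b + c ∈ IW) ∧
    -- exactness in the middle: the kernel of `p` is the image of `γ`
    (∀ b ∈ IU, ∀ c ∈ IV, (b + c = 0 ↔ ∃ a ∈ IA, b = a ∧ c = -a)) ∧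
    -- `p` maps onto `kI_W`
    (∀ x ∈ IW, ∃ b ∈ IU, ∃ c ∈ IV, x = b + c) := by
  intro W IA IU IV IW
  open AmalgamatedProduct in
  obtain ⟨h, hh⟩ := exists_isCosetForestHeight A α hα
  have hAU : A.map (inl A α) ≤ (inl A α).range := Subgroup.map_le_range _ _
  have hAV : A.map (inl A α) ≤ (inr A α).range := by
    rintro _ ⟨a, ha, rfl⟩
    exact ⟨α ⟨a, ha⟩, (inl_eq_inr A α ⟨a, ha⟩).symm⟩
  have hIW : IW = IU ⊔ IV := relAugIdeal_top.symm.trans <| by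
    rw [← range_inl_sup_range_inr, relAugIdeal_sup]
  refine ⟨fun a ha => ⟨relAugIdeal_mono hAU ha, relAugIdeal_mono hAV ha⟩,
    fun a b hab => Subtype.ext congr(($hab).1),
    fun b hb c hc => hIW ▸ add_mem (Submodule.mem_sup_left hb) (Submodule.mem_sup_right hc),
    fun b hb c hc => ⟨fun hbc => ?_, ?_⟩, fun x hx => ?_⟩
  · have hcb : c = -b := eq_neg_of_add_eq_zero_right hbc
    exact ⟨b, relAugIdeal_inf_le hAU hAV hh ⟨hb, by simpa [hcb] using hc⟩, rfl, hcb⟩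
  · rintro ⟨a, -, rfl, rfl⟩
    exact add_neg_cancel _
  · obtain ⟨b, hb, c, hc, rfl⟩ := Submodule.mem_sup.1 (hIW ▸ hx)
    exact ⟨b, hb, c, hc, rfl⟩
end

section
/- Let k be a commutative ring and let φ : G̃ → G be a surjective group homomorphism with kernel K. Suppose that the natural homomorphism of left kG-modules α : kG ⊗_{kG̃} kI_{G̃} → kI_G, defined by the k-linear extension of a ⊗ b ↦ a·φ(b), is an isomorphism. Then k ⊗_ℤ K_ab = 0, where K_ab is the abelianization of K. -/
open scoped TensorProduct

section

variable (k : Type*) [CommRing k] {Gt G : Type*} [Group Gt] [Group G] (φ : Gt →* G)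

noncomputable def phiHat : MonoidAlgebra k Gt →ₐ[k] MonoidAlgebra k G :=
  MonoidAlgebra.mapDomainAlgHom k k φ

noncomputable def betaMap :
    (MonoidAlgebra k G) ⊗[k] (augIdeal k Gt) →ₗ[k] MonoidAlgebra k G :=
  TensorProduct.lift <| LinearMap.mk₂ k
    (fun a b => a * phiHat k φ (b : MonoidAlgebra k Gt))
    (fun a a' b => by simp only [add_mul])
    (fun c a b => by simp only [smul_mul_assoc])
    (fun a b b' => by simp only [Submodule.coe_add, map_add, mul_add])
    (fun c a b => by simp only [Submodule.coe_smul_of_tower, map_smul, mul_smul_comm])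

noncomputable def balancingRel :
    Submodule k ((MonoidAlgebra k G) ⊗[k] (augIdeal k Gt)) :=
  Submodule.span k
    {z | ∃ (a : MonoidAlgebra k G) (s : MonoidAlgebra k Gt) (b : augIdeal k Gt),
      z = (a * phiHat k φ s) ⊗ₜ[k] b - a ⊗ₜ[k] (s • b)}

end

/-!
Choose a section `σ` of `φ` with `σ 1 = 1`. The elements `σ(g)·h·σ(g·φ(h))⁻¹` lie in `K` and
satisfy a cocycle identity, so `g ⊗ h ↦ 1 ⊗ [σ(g)·h·σ(g·φ(h))⁻¹]` extends to a `k`-linear map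
`kG ⊗_k kI_{G̃} → k ⊗ K_ab`; the cocycle identity makes it kill the balancing relations, because
the defect it produces is a multiple of the augmentation of the right factor. For `κ ∈ K` the
element `1 ⊗ (κ - 1)` lies in the kernel of `β`, hence among the balancing relations, while the
map sends it to `1 ⊗ [κ]`.
-/

open MonoidAlgebra TensorProduct

lemma augHom_single (k : Type*) [CommRing k] {G : Type*} [Group G] (g : G) (c : k) :
    augHom k G (single g c) = c := by
  simp [augHom, lift_single]

lemma single_sub_one_mem_augIdeal (k : Type*) [CommRing k] {G : Type*} [Group G] (g : G) :
    single g (1 : k) - 1 ∈ augIdeal k G := by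
  change augHom k G _ = 0
  rw [map_sub, augHom_single, map_one, sub_self]

lemma phiHat_single (k : Type*) [CommRing k] {Gt G : Type*} [Group Gt] [Group G] (φ : Gt →* G)
    (t : Gt) (c : k) : phiHat k φ (single t c) = single (φ t) c := by
  rw [phiHat, mapDomainAlgHom_apply, mapDomain_single]

lemma betaMap_one_tmul_eq_zero (k : Type*) [CommRing k] {Gt G : Type*} [Group Gt] [Group G]
    (φ : Gt →* G) {κ : Gt} (hκ : κ ∈ φ.ker) :
    betaMap k φ (1 ⊗ₜ ⟨single κ 1 - 1, single_sub_one_mem_augIdeal k κ⟩) = 0 := by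
  simp only [betaMap, lift.tmul, LinearMap.mk₂_apply, one_mul, map_sub, map_one,
    phiHat_single, MonoidHom.mem_ker.mp hκ]
  rw [← one_def, sub_self]

lemma single_eq_smul_single_one {R H : Type*} [Semiring R] (x : H) (c : R) :
    single x c = c • single x 1 := by
  rw [smul_single', mul_one]

section BilinLift

variable {k : Type*} [CommRing k] {Gt G : Type*} {M : Type*} [AddCommGroup M] [Module k M]
  (v : G → Gt → M)

noncomputable def bilinLift : MonoidAlgebra k G →ₗ[k] MonoidAlgebra k Gt →ₗ[k] M :=
  (basis G k).constr k fun g => (basis Gt k).constr k (v g)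

lemma bilinLift_single_single (g : G) (h : Gt) (a b : k) :
    bilinLift v (single g a) (single h b) = (a * b) • v g h := by
  rw [single_eq_smul_single_one g, single_eq_smul_single_one h, map_smul, map_smul,
    LinearMap.smul_apply, ← basis_apply, ← basis_apply, bilinLift, Module.Basis.constr_basis,
    Module.Basis.constr_basis, smul_smul, mul_comm]

variable [Group Gt] [Group G]

lemma bilinLift_single_one_mul (φ : Gt →* G) (hv : ∀ g t h, v g (t * h) = v (g * φ t) h + v g t)
    (g : G) (t : Gt) (x : MonoidAlgebra k Gt) :
    bilinLift v (single g 1) (single t 1 * x) =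
      bilinLift v (single (g * φ t) 1) x + augHom k Gt x • v g t := by
  induction x using MonoidAlgebra.induction_linear with
  | zero => simp
  | add x y hx hy => rw [mul_add, map_add, hx, hy, map_add, map_add, add_smul]; abel
  | single h c =>
    rw [single_mul_single, bilinLift_single_single, bilinLift_single_single, augHom_single, hv,
      smul_add, one_mul, one_mul]

lemma bilinLift_mul_phiHat (φ : Gt →* G) (hv : ∀ g t h, v g (t * h) = v (g * φ t) h + v g t)
    (a : MonoidAlgebra k G) (s : MonoidAlgebra k Gt) {x : MonoidAlgebra k Gt}
    (hx : x ∈ augIdeal k Gt) : bilinLift v (a * phiHat k φ s) x = bilinLift v a (s * x) := by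
  induction a using MonoidAlgebra.induction_linear with
  | zero => simp
  | add a a' ha ha' =>
    rw [add_mul, map_add, map_add, LinearMap.add_apply, LinearMap.add_apply, ha, ha']
  | single g c =>
    induction s using MonoidAlgebra.induction_linear with
    | zero => simp
    | add s s' hs hs' =>
      rw [map_add, mul_add, map_add, add_mul, map_add, LinearMap.add_apply, hs, hs']
    | single t d =>
      have hx0 : augHom k Gt x = 0 := hx
      rw [phiHat_single, single_mul_single, single_eq_smul_single_one (g * φ t),
        single_eq_smul_single_one g, single_eq_smul_single_one t, smul_mul_assoc, map_smul,
        map_smul, map_smul, LinearMap.smul_apply, LinearMap.smul_apply,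
        bilinLift_single_one_mul v φ hv, hx0, zero_smul, add_zero, smul_smul, mul_comm c d]

noncomputable def tensorLift : MonoidAlgebra k G ⊗[k] augIdeal k Gt →ₗ[k] M :=
  lift ((bilinLift v).compl₂ ((augIdeal k Gt).subtype.restrictScalars k))

lemma balancingRel_le_ker_tensorLift (φ : Gt →* G)
    (hv : ∀ g t h, v g (t * h) = v (g * φ t) h + v g t) :
    balancingRel k φ ≤ LinearMap.ker (tensorLift v) := by
  rw [balancingRel, Submodule.span_le]
  rintro _ ⟨a, s, b, rfl⟩
  simp only [SetLike.mem_coe, LinearMap.mem_ker, map_sub, tensorLift, lift.tmul,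
    LinearMap.compl₂_apply]
  exact sub_eq_zero.mpr (bilinLift_mul_phiHat v φ hv a s b.2)

lemma tensorLift_one_tmul (h : Gt) :
    tensorLift v (1 ⊗ₜ ⟨single h 1 - 1, single_sub_one_mem_augIdeal k h⟩) = v 1 h - v 1 1 := by
  simp only [tensorLift, lift.tmul, LinearMap.compl₂_apply, LinearMap.restrictScalars_apply,
    Submodule.subtype_apply, map_sub, one_def, bilinLift_single_single, mul_one, one_smul]

end BilinLift

section FactorSet

variable {Gt G : Type*} [Group Gt] [Group G] {φ : Gt →* G} {σ : G → Gt}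
  (hσ : Function.RightInverse σ φ)

def factorSet (g : G) (h : Gt) : φ.ker :=
  ⟨σ g * h * (σ (g * φ h))⁻¹, by simp [hσ _]⟩

lemma factorSet_mul (g : G) (t h : Gt) :
    factorSet hσ g (t * h) = factorSet hσ g t * factorSet hσ (g * φ t) h := by
  ext
  simp only [factorSet, Subgroup.coe_mul, map_mul, mul_assoc]
  group

lemma factorSet_one_left (hσ₁ : σ 1 = 1) (κ : φ.ker) : factorSet hσ 1 κ = κ := by
  ext
  simp [factorSet, hσ₁, MonoidHom.mem_ker.mp κ.2]

end FactorSet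

lemma exists_rightInverse_map_one {Gt G : Type*} [Group Gt] [Group G] {φ : Gt →* G}
    (hφ : Function.Surjective φ) : ∃ σ : G → Gt, Function.RightInverse σ φ ∧ σ 1 = 1 :=
  ⟨fun g => (Function.surjInv hφ 1)⁻¹ * Function.surjInv hφ g,
    fun g => by simp [Function.surjInv_eq hφ], inv_mul_cancel _⟩

section AbelClass

variable (k : Type*) [CommRing k] {K : Type*} [Group K]

noncomputable def abelClass (κ : K) : k ⊗[ℤ] Additive (Abelianization K) :=
  1 ⊗ₜ Additive.ofMul (Abelianization.of κ)

lemma abelClass_mul (κ κ' : K) : abelClass k (κ * κ') = abelClass k κ + abelClass k κ' := by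
  rw [abelClass, map_mul, ofMul_mul, tmul_add]
  rfl

lemma abelClass_one : abelClass k (1 : K) = 0 := by
  rw [abelClass, map_one, ofMul_one, tmul_zero]

lemma subsingleton_of_abelClass_eq_zero (h : ∀ κ : K, abelClass k κ = 0) :
    Subsingleton (k ⊗[ℤ] Additive (Abelianization K)) := by
  refine subsingleton_of_forall_eq 0 fun z => ?_
  induction z using TensorProduct.induction_on with
  | zero => rfl
  | tmul c x =>
    obtain ⟨κ, hκ⟩ := QuotientGroup.mk'_surjective (commutator K) x.toMul
    rw [← ofMul_toMul x, ← hκ, ← mul_one c, ← smul_eq_mul, ← smul_tmul']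
    exact (congrArg (c • ·) (h κ)).trans (smul_zero c)
  | add x y hx hy => rw [hx, hy, add_zero]

lemma abelClass_factorSet_mul {Gt G : Type*} [Group Gt] [Group G] {φ : Gt →* G} {σ : G → Gt}
    (hσ : Function.RightInverse σ φ) (g : G) (t h : Gt) :
    abelClass k (factorSet hσ g (t * h)) =
      abelClass k (factorSet hσ (g * φ t) h) + abelClass k (factorSet hσ g t) := by
  rw [factorSet_mul, abelClass_mul, add_comm]

end AbelClass

theorem tensor_abelianization_ker_eq_zero_general (k : Type*) [CommRing k]
    (Gt G : Type*) [Group Gt] [Group G] (φ : Gt →* G) (hφ : Function.Surjective φ)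
    (hker : LinearMap.ker (betaMap k φ) = balancingRel k φ) :
    Subsingleton (k ⊗[ℤ] (Additive (Abelianization φ.ker))) := by
  obtain ⟨σ, hσ, hσ₁⟩ := exists_rightInverse_map_one hφ
  refine subsingleton_of_abelClass_eq_zero k fun κ => ?_
  have hbal : _ ∈ balancingRel k φ :=
    hker ▸ LinearMap.mem_ker.mpr (betaMap_one_tmul_eq_zero k φ κ.2)
  have hvanish := balancingRel_le_ker_tensorLift (fun g h => abelClass k (factorSet hσ g h)) φ
    (abelClass_factorSet_mul k hσ) hbal
  have hσ₁₁ : factorSet hσ 1 1 = 1 := factorSet_one_left hσ hσ₁ 1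
  rwa [LinearMap.mem_ker, tensorLift_one_tmul, factorSet_one_left hσ hσ₁, hσ₁₁, abelClass_one,
    sub_zero] at hvanish

/-- **Proposition (kernels modulo `k`).** Let `φ : G̃ → G` be a surjective group homomorphism
with kernel `K`.  If the natural homomorphism of `kG`-modules
`α : kG ⊗_{kG̃} kI_{G̃} → kI_G`, `a ⊗ b ↦ a·φ(b)`, is an isomorphism — equivalently, if the
`k`-linear map `β : kG ⊗_k kI_{G̃} → kG` has range exactly `kI_G` and kernel exactly the
submodule of balancing relations — then `k ⊗_ℤ K_ab = 0`. -/
theorem tensor_abelianization_ker_eq_zero (k : Type*) [CommRing k]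
    (Gt G : Type*) [Group Gt] [Group G] (φ : Gt →* G) (hφ : Function.Surjective φ)
    (hrange : LinearMap.range (betaMap k φ) =
      Submodule.restrictScalars k (augIdeal k G))
    (hker : LinearMap.ker (betaMap k φ) = balancingRel k φ) :
    Subsingleton (k ⊗[ℤ] (Additive (Abelianization φ.ker))) :=
  tensor_abelianization_ker_eq_zero_general k Gt G φ hφ hker
end

section
/- Let R be a subring of a division ring D and let M be a left R-module. Then M is D-torsion-free if and only if there exist a left D-module N and an injective homomorphism of R-modules M → N (where N is regarded as an R-module by restriction of scalars). -/
/-!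
The canonical map `M → D ⊗_R M` is itself an `R`-linear embedding into a `D`-module whenever it is
injective. Conversely, an `R`-linear `f : M → N` into a `D`-module factors through
`D ⊗_R M` via `d ⊗ m ↦ d • f m`, so injectivity of `f` forces injectivity of `m ↦ 1 ⊗ m`.
-/

open scoped TensorProduct

universe u

/-- The balancing relations defining the tensor product `D ⊗_R M` over the (possibly
noncommutative) ring `R` as a quotient of `D ⊗_ℤ M`. -/
def tensorRel (D : Type u) [DivisionRing D] (R : Subring D)
    (M : Type u) [AddCommGroup M] [Module R M] : Submodule ℤ (D ⊗[ℤ] M) :=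
  Submodule.span ℤ
    {x | ∃ (d : D) (r : R) (m : M), x = (d * (r : D)) ⊗ₜ[ℤ] m - d ⊗ₜ[ℤ] (r • m)}

/-- The tensor product `D ⊗_R M` of the right `R`-module `D` and the left `R`-module `M`,
realized as the quotient of `D ⊗_ℤ M` by the balancing relations. -/
abbrev NCTensor (D : Type u) [DivisionRing D] (R : Subring D)
    (M : Type u) [AddCommGroup M] [Module R M] :=
  (D ⊗[ℤ] M) ⧸ tensorRel D R M

section

variable (D : Type u) [DivisionRing D] (R : Subring D)
variable (M : Type u) [AddCommGroup M] [Module R M]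

/-- Left multiplication by `d : D` on `D ⊗_ℤ M`. -/
noncomputable def lmulAux (d : D) : (D ⊗[ℤ] M) →ₗ[ℤ] (D ⊗[ℤ] M) :=
  TensorProduct.map ((AddMonoidHom.mulLeft d).toIntLinearMap) LinearMap.id

lemma lmulAux_rel (d : D) :
    tensorRel D R M ≤ (tensorRel D R M).comap (lmulAux D M d) := by
  refine Submodule.span_le.mpr ?_
  rintro x ⟨a, r, m, rfl⟩
  show lmulAux D M d ((a * (r : D)) ⊗ₜ[ℤ] m - a ⊗ₜ[ℤ] (r • m)) ∈ tensorRel D R M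
  have h : lmulAux D M d ((a * (r : D)) ⊗ₜ[ℤ] m - a ⊗ₜ[ℤ] (r • m)) =
      ((d * a) * (r : D)) ⊗ₜ[ℤ] m - (d * a) ⊗ₜ[ℤ] (r • m) := by
    rw [map_sub, mul_assoc]
    first
    | rfl
    | (erw [TensorProduct.map_tmul, TensorProduct.map_tmul]; rfl)
  rw [h]
  exact Submodule.subset_span ⟨d * a, r, m, rfl⟩

/-- Left multiplication by `d : D` on `D ⊗_R M`. -/
noncomputable def lmulQ (d : D) : NCTensor D R M →ₗ[ℤ] NCTensor D R M :=
  Submodule.mapQ _ _ (lmulAux D M d) (lmulAux_rel D R M d)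

lemma lmulQ_mk_tmul (d a : D) (m : M) :
    lmulQ D R M d (Submodule.Quotient.mk (a ⊗ₜ[ℤ] m)) =
      Submodule.Quotient.mk ((d * a) ⊗ₜ[ℤ] m) := by
  show Submodule.Quotient.mk (lmulAux D M d (a ⊗ₜ[ℤ] m)) = _
  first
  | rfl
  | (erw [lmulAux, TensorProduct.map_tmul]; rfl)

lemma NCTensor.inductionOn {P : NCTensor D R M → Prop} (x : NCTensor D R M)
    (zero : P 0)
    (tmul : ∀ (a : D) (m : M), P (Submodule.Quotient.mk (a ⊗ₜ[ℤ] m)))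
    (add : ∀ x y, P x → P y → P (x + y)) : P x := by
  obtain ⟨y, rfl⟩ := Submodule.Quotient.mk_surjective _ x
  induction y using TensorProduct.induction_on with
  | zero => simpa using zero
  | tmul a m => exact tmul a m
  | add y z hy hz =>
      rw [Submodule.Quotient.mk_add]
      exact add _ _ hy hz

noncomputable instance : SMul D (NCTensor D R M) :=
  ⟨fun d x => lmulQ D R M d x⟩

lemma nct_smul_def (d : D) (x : NCTensor D R M) : d • x = lmulQ D R M d x := rfl

/-- The left `D`-module structure on `D ⊗_R M`. -/
noncomputable instance : Module D (NCTensor D R M) where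
  one_smul x := by
    refine NCTensor.inductionOn D R M (P := fun z => (1 : D) • z = z) x ?_ ?_ ?_
    · simp only [nct_smul_def, map_zero]
    · intro a m
      rw [nct_smul_def, lmulQ_mk_tmul, one_mul]
    · intro x y hx hy
      rw [nct_smul_def, map_add, ← nct_smul_def, ← nct_smul_def, hx, hy]
  mul_smul d e x := by
    refine NCTensor.inductionOn D R M (P := fun z => (d * e) • z = d • e • z) x ?_ ?_ ?_
    · simp only [nct_smul_def, map_zero]
    · intro a m
      simp only [nct_smul_def, lmulQ_mk_tmul, mul_assoc]
    · intro x y hx hy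
      simp only [nct_smul_def, map_add] at hx hy ⊢
      rw [hx, hy]
  smul_zero d := map_zero (lmulQ D R M d)
  smul_add d x y := map_add (lmulQ D R M d) x y
  add_smul d e x := by
    refine NCTensor.inductionOn D R M (P := fun z => (d + e) • z = d • z + e • z) x ?_ ?_ ?_
    · simp only [nct_smul_def, map_zero, add_zero]
    · intro a m
      simp only [nct_smul_def, lmulQ_mk_tmul, add_mul]
      rw [TensorProduct.add_tmul, Submodule.Quotient.mk_add]
    · intro x y hx hy
      simp only [nct_smul_def, map_add] at hx hy ⊢
      rw [hx, hy]
      abel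
  zero_smul x := by
    refine NCTensor.inductionOn D R M (P := fun z => (0 : D) • z = 0) x ?_ ?_ ?_
    · simp only [nct_smul_def, map_zero]
    · intro a m
      rw [nct_smul_def, lmulQ_mk_tmul, zero_mul, TensorProduct.zero_tmul,
        Submodule.Quotient.mk_zero]
    · intro x y hx hy
      rw [nct_smul_def, map_add, ← nct_smul_def, ← nct_smul_def, hx, hy, add_zero]

/-- The canonical map `M → D ⊗_R M`, `m ↦ 1 ⊗ m`. -/
noncomputable def toNCTensor : M → NCTensor D R M :=
  fun m => Submodule.Quotient.mk ((1 : D) ⊗ₜ[ℤ] m)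

/-- A left `R`-module `M` is *`D`-torsion-free* if the canonical map `M → D ⊗_R M`,
`m ↦ 1 ⊗ m`, is injective. -/
def IsDTorsionFree : Prop := Function.Injective (toNCTensor D R M)

end

section

variable (D : Type u) [DivisionRing D] (R : Subring D)
variable (M : Type u) [AddCommGroup M] [Module R M]

noncomputable def toNCTensorAddHom : M →+ NCTensor D R M where
  toFun := toNCTensor D R M
  map_zero' := by simp [toNCTensor]
  map_add' x y := by simp [toNCTensor, TensorProduct.tmul_add]

lemma NCTensor.mk_mul_tmul (d : D) (r : R) (m : M) :
    (Submodule.Quotient.mk ((d * r) ⊗ₜ[ℤ] m) : NCTensor D R M) =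
      Submodule.Quotient.mk (d ⊗ₜ[ℤ] (r • m)) :=
  (Submodule.Quotient.eq _).mpr (Submodule.subset_span ⟨d, r, m, rfl⟩)

lemma toNCTensor_smul (r : R) (m : M) :
    toNCTensor D R M (r • m) = (r : D) • toNCTensor D R M m := by
  rw [toNCTensor, toNCTensor, nct_smul_def, lmulQ_mk_tmul, mul_one, ← one_mul (r : D),
    NCTensor.mk_mul_tmul]

variable {D R M} {N : Type u} [AddCommGroup N] [Module D N]

/-- The `ℤ`-linear map `D ⊗_R M → N`, `d ⊗ m ↦ d • f m`, induced by an `R`-linear `f`. -/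
noncomputable def NCTensor.lift (f : M →+ N) (hf : ∀ (r : R) (m : M), f (r • m) = (r : D) • f m) :
    NCTensor D R M →ₗ[ℤ] N :=
  (tensorRel D R M).liftQ
    (TensorProduct.lift ((Algebra.lsmul ℤ ℤ N).toLinearMap.compl₂ f.toIntLinearMap)) <| by
    refine Submodule.span_le.mpr ?_
    rintro _ ⟨d, r, m, rfl⟩
    show TensorProduct.lift _ _ = 0
    rw [map_sub, TensorProduct.lift.tmul, TensorProduct.lift.tmul]
    simp [hf]

lemma NCTensor.lift_toNCTensor (f : M →+ N) (hf : ∀ (r : R) (m : M), f (r • m) = (r : D) • f m)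
    (m : M) : NCTensor.lift f hf (toNCTensor D R M m) = f m :=
  one_smul D (f m)

end

/-- **Lemma (criterion for `D`-torsion-freeness).** Let `R` be a subring of a division ring `D`
and `M` a left `R`-module.  Then `M` is `D`-torsion-free if and only if there is a left
`D`-module `N` and an injective homomorphism of `R`-modules `M → N`, where `N` is an
`R`-module by restriction of scalars along `R ⊆ D`. -/
theorem isDTorsionFree_iff_embeds_in_D_module (D : Type u) [DivisionRing D] (R : Subring D)
    (M : Type u) [AddCommGroup M] [Module R M] :
    IsDTorsionFree D R M ↔
      ∃ (N : Type u) (_ : AddCommGroup N) (_ : Module D N) (f : M →+ N),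
        Function.Injective f ∧ ∀ (r : R) (m : M), f (r • m) = (r : D) • f m := by
  constructor
  · intro h
    exact ⟨_, _, _, toNCTensorAddHom D R M, h, toNCTensor_smul D R M⟩
  · rintro ⟨N, _, _, f, hf, hsmul⟩
    refine Function.Injective.of_comp (f := NCTensor.lift f hsmul) ?_
    simpa only [Function.comp_def, NCTensor.lift_toNCTensor] using hf
end

section
/- Let U and V be torsion-free groups, let v1 ∈ U and v2 ∈ V be nontrivial elements, let n1, n2 ≥ 2 be integers, and set u = v1^{n1} ∈ U and v = v2^{n2} ∈ V, assumed nontrivial. Let W = U *_{u=v} V be the amalgamated free product of U and V identifying u with v (the pushout of the inclusions of ⟨u⟩ into U and of ⟨v⟩ into V along u ↦ v). Then the centralizer in W of the image of u is not abelian; in particular it is not cyclic. -/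
/-- The amalgamated free product `U *_{u = v} V`: the quotient of the free product
`U * V` by the normal closure of `u * v⁻¹`. -/
def Amalgam (U V : Type*) [Group U] [Group V] (u : U) (v : V) :=
  Monoid.Coprod U V ⧸
    Subgroup.normalClosure {Monoid.Coprod.inl u * (Monoid.Coprod.inr v)⁻¹}

instance (U V : Type*) [Group U] [Group V] (u : U) (v : V) : Group (Amalgam U V u v) :=
  inferInstanceAs (Group (Monoid.Coprod U V ⧸
    Subgroup.normalClosure {Monoid.Coprod.inl u * (Monoid.Coprod.inr v)⁻¹}))

/-- Old Mathlib's `Monoid.IsTorsionFree` (removed since): no nontrivial element has finite order. -/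
def Monoid.IsTorsionFree (G : Type*) [Monoid G] : Prop :=
  ∀ g : G, g ≠ 1 → ¬IsOfFinOrder g

/-!
Both `v1` and `v2` commute with `u`, since `u = v1 ^ n1 = v2 ^ n2` in `W`, so it suffices that
they do not commute with each other. Map `W` to Mathlib's amalgamated product `PushoutI` of
`U` and `V` over `ℤ`, where `1 ↦ u` and `1 ↦ v`; these maps are injective by torsion-freeness.
As `n1, n2 ≥ 2`, neither `v1` nor `v2` lies in the amalgamated subgroup, so the commutator
`v1 v2 v1⁻¹ v2⁻¹` is a nonempty reduced word and hence nontrivial by the normal form theorem.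
-/

open Monoid

theorem Subgroup.notMem_zpowers_pow {G : Type*} [Group G] {g : G} (hg : ¬IsOfFinOrder g)
    {n : ℕ} (hn : n ≠ 1) : g ∉ Subgroup.zpowers (g ^ n) := by
  rwa [mem_zpowers_pow_iff, orderOf_eq_zero_iff.2 hg, Nat.gcd_zero_right]

theorem Subgroup.mem_centralizer_singleton_of_pow_eq {G : Type*} [Group G] {a g : G} {n : ℕ}
    (h : a ^ n = g) : a ∈ Subgroup.centralizer {g} :=
  Subgroup.mem_centralizer_singleton_iff.2 (h ▸ (Commute.self_pow a n).eq)

namespace Monoid.PushoutI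

variable {ι : Type*} {G : ι → Type*} {H : Type*} [∀ i, Group (G i)] [Group H]
  {φ : ∀ i, H →* G i}

theorem not_commute_of_notMem_range (hφ : ∀ i, Function.Injective (φ i)) {i j : ι}
    (hij : i ≠ j) {x : G i} {y : G j} (hx : x ∉ (φ i).range) (hy : y ∉ (φ j).range) :
    ¬Commute (of (φ := φ) i x) (of j y) := by
  intro hxy
  have hx1 : x ≠ 1 := fun h => hx (h ▸ one_mem _)
  have hy1 : y ≠ 1 := fun h => hy (h ▸ one_mem _)
  let w : CoprodI.Word G :=
    ⟨[⟨i, x⟩, ⟨j, y⟩, ⟨i, x⁻¹⟩, ⟨j, y⁻¹⟩], by simp [hx1, hy1], by simp [hij, hij.symm]⟩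
  have hw : Reduced φ w := by
    simp only [Reduced, w, List.mem_cons, List.not_mem_nil, or_false, forall_eq_or_imp,
      forall_eq, inv_mem_iff]
    exact ⟨hx, hy, hx, hy⟩
  have hprod : ofCoprodI (φ := φ) w.prod =
      of i x * of j y * (of (φ := φ) i x)⁻¹ * (of (φ := φ) j y)⁻¹ := by
    simp [w, CoprodI.Word.prod, mul_assoc]
  have hmem : ofCoprodI (φ := φ) w.prod ∈ (base φ).range := by
    rw [hprod, hxy.eq, mul_inv_cancel_right, mul_inv_cancel]
    exact one_mem _
  have hempty := hw.eq_empty_of_mem_range hφ hmem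
  simpa [w, CoprodI.Word.empty] using congrArg CoprodI.Word.toList hempty

end Monoid.PushoutI

namespace Amalgam

universe u₁ u₂

variable {U : Type u₁} {V : Type u₂} [Group U] [Group V]

variable (U V) in
/-- `PushoutI` needs its factors indexed by one type and living in one universe. -/
def Factor : Bool → Type (max u₁ u₂) :=
  fun b => cond b (ULift.{u₂} U) (ULift.{u₁} V)

instance instGroupFactor : ∀ b, Group (Factor U V b)
  | true => inferInstanceAs (Group (ULift U))
  | false => inferInstanceAs (Group (ULift V))

def baseHom (u : U) (v : V) : ∀ b, Multiplicative ℤ →* Factor U V b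
  | true => MulEquiv.ulift.symm.toMonoidHom.comp (zpowersHom U u)
  | false => MulEquiv.ulift.symm.toMonoidHom.comp (zpowersHom V v)

theorem baseHom_injective {u : U} {v : V} (hu : ¬IsOfFinOrder u) (hv : ¬IsOfFinOrder v) :
    ∀ b, Function.Injective (baseHom u v b)
  | true => MulEquiv.ulift.symm.injective.comp
      ((injective_zpow_iff_not_isOfFinOrder.2 hu).comp Multiplicative.toAdd.injective)
  | false => MulEquiv.ulift.symm.injective.comp
      ((injective_zpow_iff_not_isOfFinOrder.2 hv).comp Multiplicative.toAdd.injective)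

theorem baseHom_true_ofAdd_one (u : U) (v : V) :
    baseHom u v true (.ofAdd 1) = ULift.up u :=
  congrArg ULift.up (zpow_one u)

theorem baseHom_false_ofAdd_one (u : U) (v : V) :
    baseHom u v false (.ofAdd 1) = ULift.up v :=
  congrArg ULift.up (zpow_one v)

theorem up_mem_range_baseHom_true {u : U} {v : V} {x : U} :
    (ULift.up x : Factor U V true) ∈ (baseHom u v true).range ↔ x ∈ Subgroup.zpowers u := by
  constructor
  · rintro ⟨m, hm⟩; exact ⟨m.toAdd, congrArg ULift.down hm⟩
  · rintro ⟨m, hm⟩; exact ⟨.ofAdd m, congrArg ULift.up hm⟩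

theorem up_mem_range_baseHom_false {u : U} {v : V} {y : V} :
    (ULift.up y : Factor U V false) ∈ (baseHom u v false).range ↔ y ∈ Subgroup.zpowers v := by
  constructor
  · rintro ⟨m, hm⟩; exact ⟨m.toAdd, congrArg ULift.down hm⟩
  · rintro ⟨m, hm⟩; exact ⟨.ofAdd m, congrArg ULift.up hm⟩

def toCoprodPushoutI (u : U) (v : V) : Coprod U V →* PushoutI (baseHom u v) :=
  Coprod.lift ((PushoutI.of true).comp MulEquiv.ulift.symm.toMonoidHom)
    ((PushoutI.of false).comp MulEquiv.ulift.symm.toMonoidHom)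

theorem toCoprodPushoutI_inl (u : U) (v : V) (x : U) :
    toCoprodPushoutI u v (Coprod.inl x) = PushoutI.of (φ := baseHom u v) true (ULift.up x) := rfl

theorem toCoprodPushoutI_inr (u : U) (v : V) (y : V) :
    toCoprodPushoutI u v (Coprod.inr y) = PushoutI.of (φ := baseHom u v) false (ULift.up y) :=
  rfl

def toPushoutI (u : U) (v : V) : Amalgam U V u v →* PushoutI (baseHom u v) :=
  QuotientGroup.lift _ (toCoprodPushoutI u v) <| Subgroup.normalClosure_le_normal <| by
    rw [Set.singleton_subset_iff, SetLike.mem_coe, MonoidHom.mem_ker, map_mul, map_inv,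
      mul_inv_eq_one, toCoprodPushoutI_inl, toCoprodPushoutI_inr, ← baseHom_true_ofAdd_one u v,
      ← baseHom_false_ofAdd_one u v,
      PushoutI.of_apply_eq_base, PushoutI.of_apply_eq_base]

theorem mk_inl_eq_mk_inr (u : U) (v : V) :
    (QuotientGroup.mk (Coprod.inl u) : Amalgam U V u v) = QuotientGroup.mk (Coprod.inr v) := by
  have h : (QuotientGroup.mk (Coprod.inl u * (Coprod.inr v)⁻¹) : Amalgam U V u v) = 1 :=
    (QuotientGroup.eq_one_iff _).2 (Subgroup.subset_normalClosure rfl)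
  rwa [QuotientGroup.mk_mul, QuotientGroup.mk_inv, mul_inv_eq_one] at h

theorem mk_inl_pow (u : U) (v : V) (x : U) (n : ℕ) :
    (QuotientGroup.mk (Coprod.inl x) : Amalgam U V u v) ^ n =
      QuotientGroup.mk (Coprod.inl (x ^ n)) :=
  ((congrArg QuotientGroup.mk (map_pow (Coprod.inl (N := V)) x n)).trans
    (QuotientGroup.mk_pow _ _ _)).symm

theorem mk_inr_pow (u : U) (v : V) (y : V) (n : ℕ) :
    (QuotientGroup.mk (Coprod.inr y) : Amalgam U V u v) ^ n =
      QuotientGroup.mk (Coprod.inr (y ^ n)) :=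
  ((congrArg QuotientGroup.mk (map_pow (Coprod.inr (M := U)) y n)).trans
    (QuotientGroup.mk_pow _ _ _)).symm

theorem not_commute_mk_inl_mk_inr {u : U} {v : V} (hu : ¬IsOfFinOrder u)
    (hv : ¬IsOfFinOrder v) {x : U} {y : V} (hx : x ∉ Subgroup.zpowers u)
    (hy : y ∉ Subgroup.zpowers v) :
    ¬Commute (QuotientGroup.mk (Coprod.inl x) : Amalgam U V u v)
      (QuotientGroup.mk (Coprod.inr y)) := fun h =>
  PushoutI.not_commute_of_notMem_range (baseHom_injective hu hv) (by decide)
    (mt up_mem_range_baseHom_true.1 hx) (mt up_mem_range_baseHom_false.1 hy)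
    (h.map (toPushoutI u v))

end Amalgam

theorem amalgam_centralizer_not_commutative_general (U V : Type*) [Group U] [Group V]
    (htU : Monoid.IsTorsionFree U) (htV : Monoid.IsTorsionFree V)
    (v1 : U) (v2 : V) (hv1 : v1 ≠ 1) (hv2 : v2 ≠ 1)
    (n1 n2 : ℕ) (hn1 : 2 ≤ n1) (hn2 : 2 ≤ n2) :
    ¬ IsMulCommutative (Subgroup.centralizer
        ({QuotientGroup.mk (Monoid.Coprod.inl (v1 ^ n1))} :
          Set (Amalgam U V (v1 ^ n1) (v2 ^ n2)))) ∧
    ¬ IsCyclic (Subgroup.centralizer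
        ({QuotientGroup.mk (Monoid.Coprod.inl (v1 ^ n1))} :
          Set (Amalgam U V (v1 ^ n1) (v2 ^ n2)))) := by
  set C := Subgroup.centralizer
    ({QuotientGroup.mk (Coprod.inl (v1 ^ n1))} : Set (Amalgam U V (v1 ^ n1) (v2 ^ n2)))
  set a : Amalgam U V (v1 ^ n1) (v2 ^ n2) := QuotientGroup.mk (Coprod.inl v1)
  set b : Amalgam U V (v1 ^ n1) (v2 ^ n2) := QuotientGroup.mk (Coprod.inr v2)
  have hinf1 : ¬IsOfFinOrder v1 := htU v1 hv1
  have hinf2 : ¬IsOfFinOrder v2 := htV v2 hv2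
  have ha : a ∈ C := Subgroup.mem_centralizer_singleton_of_pow_eq (Amalgam.mk_inl_pow ..)
  have hb : b ∈ C := Subgroup.mem_centralizer_singleton_of_pow_eq
    ((Amalgam.mk_inr_pow ..).trans (Amalgam.mk_inl_eq_mk_inr ..).symm)
  have hab : ¬Commute a b := Amalgam.not_commute_mk_inl_mk_inr
    (fun h => (isOfFinOrder_pow.1 h).elim hinf1 (by omega))
    (fun h => (isOfFinOrder_pow.1 h).elim hinf2 (by omega))
    (Subgroup.notMem_zpowers_pow hinf1 (by omega)) (Subgroup.notMem_zpowers_pow hinf2 (by omega))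
  have hC : ¬IsMulCommutative C := fun _ => hab (setLike_mul_comm ha hb)
  exact ⟨hC, fun _ => hC inferInstance⟩

/-- **Proper powers amalgamated give non-abelian centralizers.** Let `U`, `V` be torsion-free
groups, `v1 ∈ U`, `v2 ∈ V` nontrivial, `n1, n2 ≥ 2`, and `u = v1 ^ n1 ≠ 1`, `v = v2 ^ n2 ≠ 1`.
In the amalgamated free product `W = U *_{u = v} V`, the centralizer of the image of `u` is
not abelian; in particular it is not cyclic. -/
theorem amalgam_centralizer_not_commutative (U V : Type*) [Group U] [Group V]
    (htU : Monoid.IsTorsionFree U) (htV : Monoid.IsTorsionFree V)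
    (v1 : U) (v2 : V) (hv1 : v1 ≠ 1) (hv2 : v2 ≠ 1)
    (n1 n2 : ℕ) (hn1 : 2 ≤ n1) (hn2 : 2 ≤ n2)
    (hu : v1 ^ n1 ≠ 1) (hv : v2 ^ n2 ≠ 1) :
    ¬ IsMulCommutative (Subgroup.centralizer
        ({QuotientGroup.mk (Monoid.Coprod.inl (v1 ^ n1))} :
          Set (Amalgam U V (v1 ^ n1) (v2 ^ n2)))) ∧
    ¬ IsCyclic (Subgroup.centralizer
        ({QuotientGroup.mk (Monoid.Coprod.inl (v1 ^ n1))} :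
          Set (Amalgam U V (v1 ^ n1) (v2 ^ n2)))) :=
  amalgam_centralizer_not_commutative_general U V htU htV v1 v2 hv1 hv2 n1 n2 hn1 hn2
end

section
/- Let H be a torsion-free group, let w1, w2 ∈ H be nontrivial elements, let n1, n2 ≥ 2 be integers, and set u = w1^{n1} and v = w2^{n2}, assumed nontrivial. Let W = (H * ⟨t⟩)/⟪tut⁻¹v⁻¹⟫ be the cyclic HNN extension of H identifying u with v, where ⟨t⟩ is an infinite cyclic group. Then the centralizer in W of the image of u is not abelian; in particular it is not cyclic. -/
/-- The generator `t` of the infinite cyclic group `⟨t⟩ = Multiplicative ℤ`. -/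
def tGen : Multiplicative ℤ := Multiplicative.ofAdd 1

/-- The cyclic HNN extension `(H * ⟨t⟩)/⟪t u t⁻¹ v⁻¹⟫` identifying `u` with `v`. -/
def CyclicHNN (H : Type*) [Group H] (u v : H) :=
  Monoid.Coprod H (Multiplicative ℤ) ⧸
    Subgroup.normalClosure
      {Monoid.Coprod.inr tGen * Monoid.Coprod.inl u * (Monoid.Coprod.inr tGen)⁻¹ *
        (Monoid.Coprod.inl v)⁻¹}

instance (H : Type*) [Group H] (u v : H) : Group (CyclicHNN H u v) :=
  inferInstanceAs (Group (Monoid.Coprod H (Multiplicative ℤ) ⧸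
    Subgroup.normalClosure
      {Monoid.Coprod.inr tGen * Monoid.Coprod.inl u * (Monoid.Coprod.inr tGen)⁻¹ *
        (Monoid.Coprod.inl v)⁻¹}))


/-! In `W` the element `w1` commutes with `u = w1 ^ n1`, and `t⁻¹ w2 t` commutes with
`t⁻¹ v t = u`. Since `u` and `v` have infinite order, `⟨u⟩ ≅ ⟨v⟩` via `u ↦ v`, and `W` maps onto
the HNN extension of `H` along this isomorphism. There the commutator
`w1 · t⁻¹ w2 t · w1⁻¹ · t⁻¹ w2⁻¹ t` is a reduced word, because torsion-freeness and
`n1, n2 ≥ 2` give `w1 ∉ ⟨u⟩` and `w2 ∉ ⟨v⟩`; by Britton's lemma it is nontrivial. -/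

open Monoid Subgroup

section InfiniteOrder

variable {G : Type*} [Group G]

noncomputable def zpowersEquivOfNotIsOfFinOrder {g : G} (hg : ¬IsOfFinOrder g) :
    Multiplicative ℤ ≃* zpowers g :=
  (zpowersHom G g).ofInjective fun _ _ h ↦
    Multiplicative.toAdd.injective (injective_zpow_iff_not_isOfFinOrder.2 hg h)

lemma zpowersEquivOfNotIsOfFinOrder_ofAdd_one {g : G} (hg : ¬IsOfFinOrder g) :
    zpowersEquivOfNotIsOfFinOrder hg (.ofAdd 1) = ⟨g, mem_zpowers g⟩ :=
  Subtype.ext (zpow_one g : g ^ (1 : ℤ) = g)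

noncomputable def zpowersEquivZPowersOfNotIsOfFinOrder {u v : G} (hu : ¬IsOfFinOrder u)
    (hv : ¬IsOfFinOrder v) : zpowers u ≃* zpowers v :=
  (zpowersEquivOfNotIsOfFinOrder hu).symm.trans (zpowersEquivOfNotIsOfFinOrder hv)

lemma zpowersEquivZPowersOfNotIsOfFinOrder_apply_self {u v : G} (hu : ¬IsOfFinOrder u)
    (hv : ¬IsOfFinOrder v) :
    zpowersEquivZPowersOfNotIsOfFinOrder hu hv ⟨u, mem_zpowers u⟩ = ⟨v, mem_zpowers v⟩ := by
  rw [zpowersEquivZPowersOfNotIsOfFinOrder, MulEquiv.trans_apply,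
    ← zpowersEquivOfNotIsOfFinOrder_ofAdd_one hu, MulEquiv.symm_apply_apply,
    zpowersEquivOfNotIsOfFinOrder_ofAdd_one]

lemma self_notMem_zpowers_pow {w : G} (hw : ¬IsOfFinOrder w) {n : ℕ} (hn : 2 ≤ n) :
    w ∉ zpowers (w ^ n) := by
  rintro ⟨k, hk⟩
  have hnk : (n : ℤ) * k = 1 := injective_zpow_iff_not_isOfFinOrder.2 hw <| by
    simpa only [zpow_mul, zpow_natCast, zpow_one] using hk
  have : (n : ℤ) ≤ 1 := Int.le_of_dvd one_pos ⟨k, hnk.symm⟩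
  omega

end InfiniteOrder

lemma Subgroup.not_isMulCommutative_of_not_commute {G : Type*} [Group G] {S : Subgroup G}
    {x y : G} (hx : x ∈ S) (hy : y ∈ S) (hxy : ¬Commute x y) : ¬IsMulCommutative S :=
  fun ⟨⟨hS⟩⟩ ↦ hxy (congrArg Subtype.val (hS ⟨x, hx⟩ ⟨y, hy⟩))

namespace HNNExtension

variable {G : Type*} [Group G] {A B : Subgroup G} {φ : A ≃* B}

theorem not_commute_conj_t_of_notMem {g g' : G} (hg : g ∉ A) (hg' : g' ∉ B) :
    ¬Commute (of g : HNNExtension G A B φ) (t⁻¹ * of g' * t) := by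
  intro hcomm
  have hreduced : List.IsChain (fun a b : ℤˣ × G ↦ a.2 ∈ toSubgroup A B a.1 → a.1 = b.1)
      [(-1, g'), (1, g⁻¹), (-1, g'⁻¹), (1, 1)] := by
    simp only [List.isChain_cons_cons, List.isChain_singleton, toSubgroup_neg_one,
      toSubgroup_one, inv_mem_iff, and_true]
    exact ⟨(absurd · hg'), (absurd · hg), (absurd · hg')⟩
  let w : NormalWord.ReducedWord G A B := ⟨g, [(-1, g'), (1, g⁻¹), (-1, g'⁻¹), (1, 1)], hreduced⟩
  have hprod : w.prod φ = 1 := by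
    simp only [w, NormalWord.ReducedWord.prod, List.map_cons, List.map_nil, List.prod_cons,
      List.prod_nil, Units.val_neg, Units.val_one, zpow_neg, zpow_one, map_one, mul_one, map_inv]
    calc _ = of g * (t⁻¹ * of g' * t) * (of g)⁻¹ * (t⁻¹ * of g' * t)⁻¹ := by group
      _ = 1 := by rw [hcomm.eq]; group
  have := ReducedWord.toList_eq_nil_of_mem_of_range φ w (hprod ▸ one_mem _)
  simp [w] at this

end HNNExtension

namespace CyclicHNN

variable {H : Type*} [Group H] {u v : H}

def of : H →* CyclicHNN H u v := (QuotientGroup.mk' _).comp Coprod.inl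

def t : CyclicHNN H u v := QuotientGroup.mk (Coprod.inr tGen)

theorem t_inv_mul_of_mul_t : t⁻¹ * of v * t = (of u : CyclicHNN H u v) := by
  have hrel : (QuotientGroup.mk (Coprod.inr tGen * Coprod.inl u * (Coprod.inr tGen)⁻¹ *
      (Coprod.inl v)⁻¹) : CyclicHNN H u v) = 1 :=
    (QuotientGroup.eq_one_iff _).2 (subset_normalClosure rfl)
  change t * of u * t⁻¹ * (of v)⁻¹ = 1 at hrel
  rw [← mul_inv_eq_one.1 hrel]
  group

theorem conj_t_mem_centralizer_of_commute {g : H} (hg : Commute g v) :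
    t⁻¹ * of g * t ∈ centralizer {(of u : CyclicHNN H u v)} := by
  rw [mem_centralizer_singleton_iff, ← t_inv_mul_of_mul_t]
  simpa using ((hg.map of).conj t⁻¹).eq

def toHNNExtension (φ : zpowers u ≃* zpowers v)
    (hφ : φ ⟨u, mem_zpowers u⟩ = ⟨v, mem_zpowers v⟩) :
    CyclicHNN H u v →* HNNExtension H (zpowers u) (zpowers v) φ :=
  QuotientGroup.lift _ (Coprod.lift HNNExtension.of (zpowersHom _ HNNExtension.t)) <|
    normalClosure_le_normal <| Set.singleton_subset_iff.2 <| by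
      have hconj := HNNExtension.equiv_eq_conj (φ := φ) ⟨u, mem_zpowers u⟩
      rw [hφ] at hconj
      simp [tGen, hconj]

@[simp]
theorem toHNNExtension_of (φ : zpowers u ≃* zpowers v) (hφ) (h : H) :
    toHNNExtension φ hφ (of h) = HNNExtension.of h :=
  Coprod.lift_apply_inl HNNExtension.of (zpowersHom _ HNNExtension.t) h

@[simp]
theorem toHNNExtension_t (φ : zpowers u ≃* zpowers v) (hφ) :
    toHNNExtension φ hφ t = HNNExtension.t :=
  (Coprod.lift_apply_inr HNNExtension.of (zpowersHom _ HNNExtension.t) tGen).trans <| by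
    simp [tGen]

theorem not_commute_conj_t_of_notMem (hu : ¬IsOfFinOrder u) (hv : ¬IsOfFinOrder v) {g g' : H}
    (hg : g ∉ zpowers u) (hg' : g' ∉ zpowers v) :
    ¬Commute (of g : CyclicHNN H u v) (t⁻¹ * of g' * t) := fun hcomm ↦ by
  simpa using HNNExtension.not_commute_conj_t_of_notMem hg hg' <|
    hcomm.map (toHNNExtension _ (zpowersEquivZPowersOfNotIsOfFinOrder_apply_self hu hv))

end CyclicHNN

theorem cyclicHNN_centralizer_not_commutative_general (H : Type*) [Group H]
    (htH : ∀ g : H, g ≠ 1 → ¬IsOfFinOrder g)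
    (w1 w2 : H)
    (n1 n2 : ℕ) (hn1 : 2 ≤ n1) (hn2 : 2 ≤ n2)
    (hu : w1 ^ n1 ≠ 1) (hv : w2 ^ n2 ≠ 1) :
    ¬ IsMulCommutative (Subgroup.centralizer
        ({QuotientGroup.mk (Monoid.Coprod.inl (w1 ^ n1))} :
          Set (CyclicHNN H (w1 ^ n1) (w2 ^ n2)))) ∧
    ¬ IsCyclic (Subgroup.centralizer
        ({QuotientGroup.mk (Monoid.Coprod.inl (w1 ^ n1))} :
          Set (CyclicHNN H (w1 ^ n1) (w2 ^ n2)))) := by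
  open CyclicHNN in
  have hu' := htH _ hu
  have hv' := htH _ hv
  have hx : (of w1 : CyclicHNN H (w1 ^ n1) (w2 ^ n2)) ∈ centralizer {of (w1 ^ n1)} :=
    mem_centralizer_singleton_iff.2 ((Commute.self_pow w1 n1).map of)
  have hy := conj_t_mem_centralizer_of_commute (u := w1 ^ n1) (Commute.self_pow w2 n2)
  have hxy := not_commute_conj_t_of_notMem hu' hv'
    (self_notMem_zpowers_pow (mt IsOfFinOrder.pow hu') hn1)
    (self_notMem_zpowers_pow (mt IsOfFinOrder.pow hv') hn2)
  have hS : ¬IsMulCommutative (centralizer {of (w1 ^ n1)}) :=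
    not_isMulCommutative_of_not_commute hx hy hxy
  exact ⟨hS, fun hcyc ↦ hS (@IsCyclic.isMulCommutative _ _ hcyc)⟩

/-- **Proper powers conjugated in an HNN extension give non-abelian centralizers.** Let `H` be a
torsion-free group, `w1, w2 ∈ H` nontrivial, `n1, n2 ≥ 2`, and `u = w1 ^ n1 ≠ 1`,
`v = w2 ^ n2 ≠ 1`. In the cyclic HNN extension `W = (H * ⟨t⟩)/⟪t u t⁻¹ v⁻¹⟫`, the centralizer
of the image of `u` is not abelian; in particular it is not cyclic. -/
theorem cyclicHNN_centralizer_not_commutative (H : Type*) [Group H]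
    (htH : ∀ g : H, g ≠ 1 → ¬IsOfFinOrder g)
    (w1 w2 : H) (hw1 : w1 ≠ 1) (hw2 : w2 ≠ 1)
    (n1 n2 : ℕ) (hn1 : 2 ≤ n1) (hn2 : 2 ≤ n2)
    (hu : w1 ^ n1 ≠ 1) (hv : w2 ^ n2 ≠ 1) :
    ¬ IsMulCommutative (Subgroup.centralizer
        ({QuotientGroup.mk (Monoid.Coprod.inl (w1 ^ n1))} :
          Set (CyclicHNN H (w1 ^ n1) (w2 ^ n2)))) ∧
    ¬ IsCyclic (Subgroup.centralizer
        ({QuotientGroup.mk (Monoid.Coprod.inl (w1 ^ n1))} :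
          Set (CyclicHNN H (w1 ^ n1) (w2 ^ n2)))) :=
  cyclicHNN_centralizer_not_commutative_general H htH w1 w2 n1 n2 hn1 hn2 hu hv
end
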